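/- Let θ ∈ (0, π/2) with sin θ ≤ 1/3, set ϖ = (sin θ)/3 and μ = (3 − 2 sin θ)/(3 − sin θ) ∈ (0,1). Fix x̃ ∈ ℝ^n and a unit vector ξ, and define x_0 = x̃ + d_0 ξ for some d_0 > 0, and recursively x_{k+1} = x_k − (1−μ) d_k ξ, d_{k+1} = μ d_k, ρ_k = ϖ d_k. Then (i) d_k = |x_k − x̃| = μ^k d_0, (ii) B(x_{k+1}, ρ_{k+1}) ⊆ B(x_k, 2ρ_k) for all k ≥ 0, and (iii) the union of the closed balls ⋃_{k≥0} B̄(x_k, ρ_k) contains the open segment {x̃ + t ξ : 0 < t ≤ d_0}. -/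
import Mathlib


open Metric

/-- The chain-of-balls construction. With `ϖ = sin θ/3`,
`μ = (3-2 sin θ)/(3- sin θ)`, `x₀ = xt + d₀ ξ`, `x_{k+1} = x_k - (1-μ)d_k ξ`,
`d_{k+1} = μ d_k`, `ρ_k = ϖ d_k`: (i) `d_k = ‖x_k - xt‖ = μ^k d₀`;
(ii) `B(x_{k+1},ρ_{k+1}) ⊆ B(x_k,2ρ_k)`; (iii) `⋃_k B̄(x_k,ρ_k)` contains the
segment `{xt + tξ : 0 < t ≤ d₀}`. -/
theorem stmt10 (n : ℕ) (hn : 1 ≤ n) (θ : ℝ) (hθ0 : 0 < θ) (hθ1 : θ < Real.pi/2)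
    (hsin : Real.sin θ ≤ 1/3)
    (xt ξ : EuclideanSpace ℝ (Fin n)) (hξ : ‖ξ‖ = 1) (d₀ : ℝ) (hd₀ : 0 < d₀)
    (x : ℕ → EuclideanSpace ℝ (Fin n)) (d ρ : ℕ → ℝ)
    (hx0 : x 0 = xt + d₀ • ξ) (hd0 : d 0 = d₀)
    (hxs : ∀ k, x (k+1) = x k - ((1 - (3 - 2*Real.sin θ)/(3 - Real.sin θ)) * d k) • ξ)
    (hds : ∀ k, d (k+1) = ((3 - 2*Real.sin θ)/(3 - Real.sin θ)) * d k)
    (hρ : ∀ k, ρ k = (Real.sin θ/3) * d k) :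
    (∀ k, d k = ((3 - 2*Real.sin θ)/(3 - Real.sin θ))^k * d₀ ∧
        ‖x k - xt‖ = ((3 - 2*Real.sin θ)/(3 - Real.sin θ))^k * d₀)
    ∧ (∀ k, ball (x (k+1)) (ρ (k+1)) ⊆ ball (x k) (2 * ρ k))
    ∧ (∀ t : ℝ, 0 < t → t ≤ d₀ →
        (xt + t • ξ) ∈ ⋃ k : ℕ, closedBall (x k) (ρ k)) := by
  set s := Real.sin θ with hs
  have hs0 : 0 < s := Real.sin_pos_of_pos_of_lt_pi hθ0 (lt_trans hθ1 (by linarith [Real.pi_pos]))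
  have hden : (0:ℝ) < 3 - s := by linarith
  set μ := (3 - 2*s)/(3 - s) with hμdef
  have hμ0 : 0 < μ := div_pos (by linarith) hden
  have hμ1 : μ < 1 := by
    rw [div_lt_one hden]; linarith
  -- d k formula
  have hdk : ∀ k, d k = μ^k * d₀ := by
    intro k
    induction k with
    | zero => simp [hd0]
    | succ k ih => rw [hds k, ih, pow_succ]; ring
  have hdpos : ∀ k, 0 < d k := by
    intro k; rw [hdk k]; positivity
  have hxk : ∀ k, x k = xt + (d k) • ξ := by
    intro k
    induction k with
    | zero => rw [hx0, hd0]
    | succ k ih =>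
      rw [hxs k, ih, hds k]
      module
  have hnorm : ∀ k, ‖x k - xt‖ = d k := by
    intro k
    rw [hxk k, add_sub_cancel_left, norm_smul, hξ, Real.norm_eq_abs,
      abs_of_pos (hdpos k), mul_one]
  refine ⟨fun k => ⟨hdk k, by rw [hnorm k, hdk k]⟩, ?_, ?_⟩
  · intro k
    apply ball_subset_ball'
    have hdist : dist (x (k+1)) (x k) = (1 - μ) * d k := by
      rw [hxs k, dist_eq_norm, sub_sub_cancel_left, norm_neg, norm_smul, hξ,
        Real.norm_eq_abs, mul_one, abs_of_nonneg]
      have := hdpos k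
      have : (0:ℝ) ≤ 1 - μ := by linarith
      positivity
    rw [hdist, hρ (k+1), hρ k, hds k]
    have key : (1 - μ) + (s/3) * μ = 2 * (s/3) := by
      rw [hμdef]; field_simp; ring
    have := hdpos k
    nlinarith [hdpos k]
  · intro t ht0 ht1
    set ϖ := s/3 with hϖ
    have hϖ0 : 0 < ϖ := by positivity
    have hϖ1 : ϖ < 1 := by rw [hϖ]; linarith
    -- exists k with μ^k * d₀ * (1 - ϖ) ≤ t
    have hex : ∃ k, μ^k * d₀ * (1 - ϖ) ≤ t := by
      have hpos : (0:ℝ) < d₀ * (1 - ϖ) := by nlinarith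
      obtain ⟨k, hk⟩ := exists_pow_lt_of_lt_one (div_pos ht0 hpos) hμ1
      refine ⟨k, ?_⟩
      rw [mul_assoc]
      have h2 := mul_le_mul_of_nonneg_right hk.le hpos.le
      rwa [div_mul_cancel₀ _ hpos.ne'] at h2
    classical
    let k := Nat.find hex
    have hk1 : μ^k * d₀ * (1 - ϖ) ≤ t := Nat.find_spec hex
    have hk2 : t ≤ μ^k * d₀ * (1 + ϖ) := by
      rcases Nat.eq_zero_or_pos k with h0 | hpos
      · rw [h0]; simp only [pow_zero, one_mul]; nlinarith
      · obtain ⟨m, hm⟩ := Nat.exists_eq_succ_of_ne_zero hpos.ne'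
        have hlt : ¬ (μ^m * d₀ * (1 - ϖ) ≤ t) := Nat.find_min hex (by omega)
        push_neg at hlt
        have hover : μ^m * d₀ * (1 - ϖ) ≤ μ^(m+1) * d₀ * (1 + ϖ) := by
          rw [pow_succ]
          have hμϖ : 1 - ϖ ≤ μ * (1 + ϖ) := by
            rw [hμdef, hϖ]
            rw [div_mul_eq_mul_div, le_div_iff₀ hden]
            nlinarith
          have hp : (0:ℝ) < μ^m * d₀ := by positivity
          calc μ^m * d₀ * (1 - ϖ) ≤ μ^m * d₀ * (μ * (1 + ϖ)) :=
                mul_le_mul_of_nonneg_left hμϖ hp.le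
            _ = μ^m * μ * d₀ * (1 + ϖ) := by ring
        rw [hm]
        exact le_trans hlt.le hover
    refine Set.mem_iUnion.2 ⟨k, ?_⟩
    rw [mem_closedBall, dist_eq_norm, hxk k, hdk k]
    have heq : xt + t • ξ - (xt + (μ^k * d₀) • ξ) = (t - μ^k * d₀) • ξ := by
      module
    rw [heq, norm_smul, hξ, mul_one, Real.norm_eq_abs, hρ k, hdk k]
    set P := μ^k * d₀ with hP
    have e1 : P * (1 - ϖ) = P - ϖ * P := by ring
    have e2 : P * (1 + ϖ) = P + ϖ * P := by ring
    rw [e1] at hk1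
    rw [e2] at hk2
    rw [abs_le]
    exact ⟨by linarith, by linarith⟩
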